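/- For every i ∈ ℤ₊, in Ĥ one has â₀ · v̂_i = 2 v̂_i; that is, v̂_i is a 2-eigenvector of the multiplication operator ad_{â₀} : x ↦ â₀·x. -/

import Mathlib

namespace HatAlgebra

/-- Basis of the algebra `Ĥ`: vectors `â i` for `i : ℤ`, `ŝ_{0̄,j}` for `j` a positive
integer, and `ŝ_{1̄,3k}`, `ŝ_{2̄,3k}` for `k` a positive integer. -/
inductive HatB : Type
  | a : ℤ → HatB
  | s0 : ℕ+ → HatB
  | s1 : ℕ+ → HatB
  | s2 : ℕ+ → HatB
  deriving DecidableEq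

variable (F : Type*) [Field F]

/-- The underlying vector space of `Ĥ`: the free `F`-vector space on `HatB`. -/
abbrev HatH : Type _ := HatB →₀ F

/-- The basis vector `â i`. -/
noncomputable def aHat (i : ℤ) : HatH F := Finsupp.single (HatB.a i) 1

/-- The element `ŝ_{r̄,j}` of `Ĥ`, with the conventions `ŝ_{r̄,0} = 0` and
`ŝ_{1̄,j} = ŝ_{0̄,j} = ŝ_{2̄,j}` whenever `3 ∤ j`. -/
noncomputable def sHat (r : ZMod 3) (j : ℕ) : HatH F :=
  if h : j = 0 then 0
  else if h3 : 3 ∣ j then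
    if r = 0 then Finsupp.single (HatB.s0 ⟨j, Nat.pos_of_ne_zero h⟩) 1
    else if r = 1 then
      Finsupp.single (HatB.s1 ⟨j / 3,
        Nat.div_pos (Nat.le_of_dvd (Nat.pos_of_ne_zero h) h3) (by norm_num)⟩) 1
    else
      Finsupp.single (HatB.s2 ⟨j / 3,
        Nat.div_pos (Nat.le_of_dvd (Nat.pos_of_ne_zero h) h3) (by norm_num)⟩) 1
  else Finsupp.single (HatB.s0 ⟨j, Nat.pos_of_ne_zero h⟩) 1

/-- The operation `∗`: `(−1) ∗ 1̄ = −1`, `(−1) ∗ 2̄ = 1`, `0 ∗ t̄ = 0`. -/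
def hatStar (x : ℤ) (t : ZMod 3) : ℤ :=
  if x = 0 then 0 else if t = 1 then -1 else if t = 2 then 1 else 0

/-- The coefficient `(δ_{ī,r̄} − 1) ∗ (ī − r̄)` appearing in rule (Ĥ2). -/
def hatC (i r : ZMod 3) : ℤ := hatStar ((if i = r then 1 else 0) - 1) (i - r)

/-- Rule (Ĥ2): the product `â_i · ŝ_{r̄,j}`. -/
noncomputable def aMulS (i : ℤ) (r : ZMod 3) (j : ℕ) : HatH F :=
  (-2 : F) • aHat F i + (aHat F (i - (j : ℤ)) + aHat F (i + (j : ℤ))) - sHat F r j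
    - (hatC (i : ZMod 3) r : F) • (sHat F (r - 1) j - sHat F (r + 1) j)

/-- `ŝ_{0̄,n} + ŝ_{1̄,n} + ŝ_{2̄,n}`. -/
noncomputable def sSum (n : ℕ) : HatH F := sHat F 0 n + sHat F 1 n + sHat F 2 n

/-- For `r ≠ t` in `ℤ/3ℤ`, the signed sum `ŝ_{r̄,n} + ŝ_{t̄,n} − ŝ_{m̄,n}` where `m̄`
is the third residue class (appearing in rules (Ĥ5), (Ĥ6), (Ĥ7)). -/
noncomputable def sT (r t : ZMod 3) (n : ℕ) : HatH F :=
  sHat F r n + sHat F t n - sHat F (-(r + t)) n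

/-- Rules (Ĥ3)–(Ĥ7): the product `ŝ_{r̄,i} · ŝ_{t̄,j}`. -/
noncomputable def sMulS (r : ZMod 3) (i : ℕ) (t : ZMod 3) (j : ℕ) : HatH F :=
  if 3 ∣ i ∧ 3 ∣ j then
    if r = t then
      (2 : F) • (sHat F r i + sHat F r j) - (sHat F r (Nat.dist i j) + sHat F r (i + j))
    else
      (2 : F) • (sT F r t i + sT F r t j) - (sT F r t (Nat.dist i j) + sT F r t (i + j))
  else
    (2 : F) • (sHat F r i + sHat F t j) - (2 : F) • (sSum F (Nat.dist i j) + sSum F (i + j))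

/-- The product of `Ĥ` on basis vectors, given by rules (Ĥ1)–(Ĥ7) (extended
symmetrically, since the product is commutative). -/
noncomputable def mulB : HatB → HatB → HatH F
  | .a i, .a j => (-2 : F) • (aHat F i + aHat F j) + sHat F (i : ZMod 3) (i - j).natAbs
  | .a i, .s0 j => aMulS F i 0 (j : ℕ)
  | .s0 j, .a i => aMulS F i 0 (j : ℕ)
  | .a i, .s1 k => aMulS F i 1 (3 * (k : ℕ))
  | .s1 k, .a i => aMulS F i 1 (3 * (k : ℕ))
  | .a i, .s2 k => aMulS F i 2 (3 * (k : ℕ))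
  | .s2 k, .a i => aMulS F i 2 (3 * (k : ℕ))
  | .s0 i, .s0 j => sMulS F 0 (i : ℕ) 0 (j : ℕ)
  | .s0 i, .s1 k => sMulS F 0 (i : ℕ) 1 (3 * (k : ℕ))
  | .s1 k, .s0 i => sMulS F 0 (i : ℕ) 1 (3 * (k : ℕ))
  | .s0 i, .s2 k => sMulS F 0 (i : ℕ) 2 (3 * (k : ℕ))
  | .s2 k, .s0 i => sMulS F 0 (i : ℕ) 2 (3 * (k : ℕ))
  | .s1 h, .s1 k => sMulS F 1 (3 * (h : ℕ)) 1 (3 * (k : ℕ))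
  | .s1 h, .s2 k => sMulS F 1 (3 * (h : ℕ)) 2 (3 * (k : ℕ))
  | .s2 k, .s1 h => sMulS F 1 (3 * (h : ℕ)) 2 (3 * (k : ℕ))
  | .s2 h, .s2 k => sMulS F 2 (3 * (h : ℕ)) 2 (3 * (k : ℕ))

/-- The commutative bilinear product of `Ĥ`, as a bilinear map. -/
noncomputable def hatMul : HatH F →ₗ[F] HatH F →ₗ[F] HatH F :=
  Finsupp.lift (HatH F →ₗ[F] HatH F) F HatB fun x => Finsupp.lift (HatH F) F HatB (mulB F x)

/-- The product of two elements of `Ĥ`. -/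
noncomputable def hmul (x y : HatH F) : HatH F := hatMul F x y


/-- `v̂_i := −2â₀ + (â_i + â_{−i}) − ŝ_{0̄,i}`. -/
noncomputable def vHat (i : ℕ) : HatH F :=
  (-2 : F) • aHat F 0 + (aHat F (i : ℤ) + aHat F (-(i : ℤ))) - sHat F 0 i

theorem hmul_add_right (x y z : HatH F) : hmul F x (y + z) = hmul F x y + hmul F x z :=
  map_add _ y z

theorem hmul_sub_right (x y z : HatH F) : hmul F x (y - z) = hmul F x y - hmul F x z :=
  map_sub _ y z

theorem hmul_smul_right (c : F) (x y : HatH F) : hmul F x (c • y) = c • hmul F x y :=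
  map_smul _ c y

theorem hmul_single_single (b c : HatB) :
    hmul F (Finsupp.single b 1) (Finsupp.single c 1) = mulB F b c := by
  simp [hmul, hatMul]

theorem sHat_zero_right (r : ZMod 3) : sHat F r 0 = 0 :=
  dif_pos rfl

theorem sHat_zero_of_pos {j : ℕ} (hj : 0 < j) :
    sHat F 0 j = Finsupp.single (HatB.s0 ⟨j, hj⟩) 1 := by
  unfold sHat
  rw [dif_neg hj.ne']
  split_ifs <;> simp_all

theorem hmul_aHat_aHat (i j : ℤ) :
    hmul F (aHat F i) (aHat F j) = (-2 : F) • (aHat F i + aHat F j) + sHat F i (i - j).natAbs :=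
  hmul_single_single F _ _

theorem hmul_aHat_sHat_zero (i : ℤ) {j : ℕ} (hj : 0 < j) :
    hmul F (aHat F i) (sHat F 0 j) = aMulS F i 0 j := by
  rw [sHat_zero_of_pos F hj]
  exact hmul_single_single F _ _

theorem hatC_self (r : ZMod 3) : hatC r r = 0 := by
  simp [hatC, hatStar]

theorem aMulS_of_intCast_eq {i : ℤ} {r : ZMod 3} (hi : (i : ZMod 3) = r) (j : ℕ) :
    aMulS F i r j = (-2 : F) • aHat F i + (aHat F (i - j) + aHat F (i + j)) - sHat F r j := by
  simp [aMulS, hi, hatC_self]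

theorem hmul_aHat_zero_vHat {i : ℕ} (hi : 0 < i) :
    hmul F (aHat F 0) (vHat F i) = (-3 : F) • vHat F i := by
  simp only [vHat, hmul_sub_right, hmul_add_right, hmul_smul_right, hmul_aHat_aHat,
    hmul_aHat_sHat_zero F 0 hi, aMulS_of_intCast_eq F Int.cast_zero]
  simp only [sub_self, Int.natAbs_zero, sHat_zero_right, zero_sub, Int.natAbs_neg,
    Int.natAbs_natCast, sub_neg_eq_add, zero_add, Int.cast_zero]
  module

/-- For every `i ∈ ℤ₊`, `v̂_i` is a `2`-eigenvector of `ad_{â₀}`. -/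
theorem vHat_two_eigenvector [CharP F 5] (i : ℕ) (hi : 0 < i) :
    hmul F (aHat F 0) (vHat F i) = (2 : F) • vHat F i := by
  have h5 : (5 : F) = 0 := by exact_mod_cast CharP.cast_eq_zero F 5
  rw [hmul_aHat_zero_vHat F hi, show (2 : F) = -3 by linear_combination h5]

end HatAlgebra
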